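/- arXiv:1906.05127 — 3 statements merged into one kernel-verified Lean document; each statement's English description precedes it below -/
import Mathlib

section
/- With p ∈ (0,1/2), k ≥ 3, x₊ := min(1/2, p/((k-1)(1-2p))), and x₋ := (2/5)·x₊, the quantity Δ(x₋) := (log((1-x₋)/x₋))·(p - (1-2p)(k-1)x₋) + (log(1-x₋))·(1-2p)·k is strictly positive. -/
/-!
Write `c = 1 - 2p`. Since `x₋ ≤ 1/5` and `c (k-1) x₋ ≤ (2/5) p`, the first term is at least
`log 4 · (3/5) p > (3/4) p`. For the second, `log (1 - x) ≥ -(5/4) x` on `[0, 1/5]`, and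
`k ≤ (3/2)(k-1)` for `k ≥ 3`, so it is at least `-(5/4) · (3/2) · (2/5) p = -(3/4) p`.
-/

open Real

lemma log_four_le_log_one_sub_div_self {x : ℝ} (hx0 : 0 < x) (hx : x ≤ 1 / 5) :
    log 4 ≤ log ((1 - x) / x) :=
  log_le_log (by norm_num) (by rw [le_div_iff₀ hx0]; linarith)

lemma neg_five_div_four_mul_le_log_one_sub {x : ℝ} (hx0 : 0 ≤ x) (hx : x ≤ 1 / 5) :
    -(5 / 4) * x ≤ log (1 - x) := by
  have h1x : 0 < 1 - x := by linarith
  calc -(5 / 4) * x ≤ 1 - (1 - x)⁻¹ := by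
        rw [show 1 - (1 - x)⁻¹ = -(x / (1 - x)) by field_simp; ring, neg_mul, neg_le_neg_iff,
          div_le_iff₀ h1x]
        nlinarith
    _ ≤ log (1 - x) := one_sub_inv_le_log_of_pos h1x

lemma five_div_four_lt_log_four : (5 / 4 : ℝ) < log 4 := by
  rw [show (4 : ℝ) = 2 ^ 2 by norm_num, log_pow]
  linarith [log_two_gt_d9]

theorem log_one_sub_div_mul_add_log_one_sub_mul_pos {p c k x : ℝ} (hp : 0 < p) (hc : 0 ≤ c)
    (hk : 3 ≤ k) (hx0 : 0 < x) (hx : x ≤ 1 / 5) (hxp : c * (k - 1) * x ≤ 2 / 5 * p) :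
    0 < log ((1 - x) / x) * (p - c * (k - 1) * x) + log (1 - x) * (c * k) := by
  have hfirst : log 4 * (3 / 5 * p) ≤ log ((1 - x) / x) * (p - c * (k - 1) * x) :=
    mul_le_mul (log_four_le_log_one_sub_div_self hx0 hx) (by linarith) (by positivity)
      (by linarith [log_four_le_log_one_sub_div_self hx0 hx, five_div_four_lt_log_four])
  have hckx : c * k * x ≤ 3 / 5 * p := by
    nlinarith [mul_nonneg (mul_nonneg hc hx0.le) (by linarith : 0 ≤ k - 3)]
  have hsecond : -(3 / 4) * p ≤ log (1 - x) * (c * k) := by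
    nlinarith [mul_le_mul_of_nonneg_right (neg_five_div_four_mul_le_log_one_sub hx0.le hx)
      (by positivity : 0 ≤ c * k)]
  nlinarith [mul_pos (sub_pos.mpr five_div_four_lt_log_four) hp]

theorem stmt_11 (p : ℝ) (hp1 : 0 < p) (hp2 : p < 1/2) (k : ℕ) (hk : 3 ≤ k)
    (xplus xminus : ℝ) (hx : xplus = min (1/2) (p / (((k : ℝ) - 1) * (1 - 2 * p))))
    (hx' : xminus = (2/5) * xplus) :
    0 < Real.log ((1 - xminus) / xminus) * (p - (1 - 2 * p) * ((k : ℝ) - 1) * xminus)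
      + Real.log (1 - xminus) * ((1 - 2 * p) * k) := by
  have hk' : (3 : ℝ) ≤ k := by exact_mod_cast hk
  have hc : 0 < 1 - 2 * p := by linarith
  have hden : 0 < ((k : ℝ) - 1) * (1 - 2 * p) := mul_pos (by linarith) hc
  have hxplus_pos : 0 < xplus := hx ▸ lt_min (by norm_num) (div_pos hp1 hden)
  have hxplus_le : xplus ≤ 1 / 2 := hx ▸ min_le_left _ _
  have hxplus_mul : xplus * (((k : ℝ) - 1) * (1 - 2 * p)) ≤ p :=
    (le_div_iff₀ hden).mp (hx ▸ min_le_right _ _)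
  subst hx'
  refine log_one_sub_div_mul_add_log_one_sub_mul_pos hp1 hc.le hk' (by positivity)
    (by linarith) ?_
  linarith
end

section
/- For every positive integer a and real b with 0 ≤ b < 1/2, we have ((1/2 + b)^a - (1/2 - b)^a) / ((1/2 + b)^a + (1/2 - b)^a) ≤ 2·a·b. -/
lemma aux_bern (x y : ℝ) (hy : 0 < y) (hxy : y ≤ x) (n : ℕ) :
    y ^ n * ((n + 1) * x - n * y) ≤ x ^ (n + 1) := by
  have h2 : (-2 : ℝ) ≤ x / y - 1 := by
    have : (1 : ℝ) ≤ x / y := (one_le_div hy).mpr hxy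
    linarith
  have h := one_add_mul_le_pow h2 (n + 1)
  have hrw : 1 + (x / y - 1) = x / y := by ring
  rw [hrw] at h
  have hyp : (0 : ℝ) < y ^ (n + 1) := pow_pos hy _
  have h' : (1 + (n + 1 : ℕ) * (x / y - 1)) * y ^ (n + 1) ≤ (x / y) ^ (n + 1) * y ^ (n + 1) :=
    mul_le_mul_of_nonneg_right h hyp.le
  have hxy' : (x / y) ^ (n + 1) * y ^ (n + 1) = x ^ (n + 1) := by
    rw [div_pow]
    field_simp
  rw [hxy'] at h'
  have hL : (1 + (n + 1 : ℕ) * (x / y - 1)) * y ^ (n + 1) =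
      y ^ n * ((n + 1) * x - n * y) := by
    have hyne : y ≠ 0 := hy.ne'
    push_cast
    field_simp
    ring
  rw [hL] at h'
  exact h'

lemma aux_main (b : ℝ) (hb0 : 0 ≤ b) (hb : b < 1/2) (n : ℕ) :
    (1/2 + b) ^ (n + 1) - (1/2 - b) ^ (n + 1) ≤
      2 * (n + 1) * b * ((1/2 + b) ^ (n + 1) + (1/2 - b) ^ (n + 1)) := by
  set x : ℝ := 1/2 + b with hx
  set y : ℝ := 1/2 - b with hy
  have hy0 : 0 < y := by simp [hy]; linarith
  have hx0 : 0 < x := by simp [hx]; linarith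
  have hxy : y ≤ x := by simp [hx, hy]; linarith
  induction n with
  | zero => simp [hx, hy]; nlinarith
  | succ n ih =>
    have key := aux_bern x y hy0 hxy (n + 1)
    have hxn : 0 < x ^ (n + 1) := pow_pos hx0 _
    have hyn : 0 < y ^ (n + 1) := pow_pos hy0 _
    push_cast at ih key ⊢
    have h1 := mul_le_mul_of_nonneg_left ih hx0.le
    have h2 := mul_le_mul_of_nonneg_left key hb0
    have h3 : y ^ (n + 1) * (2*b*y + y - x + 2*b*x) = 0 := by
      have hz : 2*b*y + y - x + 2*b*x = 0 := by simp [hx, hy]; ring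
      rw [hz, mul_zero]
    have e1 : x ^ (n + 1 + 1) = x * x ^ (n + 1) := by ring
    have e2 : y ^ (n + 1 + 1) = y * y ^ (n + 1) := by ring
    rw [e1, e2]
    nlinarith [h1, h2, h3]

theorem stmt_14 (a : ℕ) (ha : 1 ≤ a) (b : ℝ) (hb0 : 0 ≤ b) (hb : b < 1/2) :
    ((1/2 + b) ^ a - (1/2 - b) ^ a) / ((1/2 + b) ^ a + (1/2 - b) ^ a) ≤ 2 * a * b := by
  have hx0 : (0:ℝ) < 1/2 + b := by linarith
  have hy0 : (0:ℝ) < 1/2 - b := by linarith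
  have hden : (0:ℝ) < (1/2 + b) ^ a + (1/2 - b) ^ a :=
    add_pos (pow_pos hx0 _) (pow_pos hy0 _)
  rw [div_le_iff₀ hden]
  obtain ⟨n, rfl⟩ : ∃ n, a = n + 1 := ⟨a - 1, (Nat.succ_pred_eq_of_pos ha).symm⟩
  have := aux_main b hb0 hb n
  push_cast
  push_cast at this
  linarith
end

section
/- Let d ≥ 1 and let g : {-1,1}^d → {-1,0,1} be a non-decreasing odd function (g(-σ) = -g(σ), and σ ≤ τ coordinatewise implies g(σ) ≤ g(τ)) which is not identically zero. For b ∈ [0, 1/2), let 𝐛 be a random element of {-1,1}^d with independent coordinates each equal to +1 with probability 1/2 + b. Then the conditional expectation E[g(𝐛) | g(𝐛) ≠ 0] is at most 2·d·b. -/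
lemma tanh_aux (x y : ℝ) (hy : 0 ≤ y) (hxy : y ≤ x) (m : ℕ) :
    (x+y)*(x^m - y^m) ≤ m*(x-y)*(x^m+y^m) := by
  induction m with
  | zero => simp
  | succ n ih =>
    have hA : y^n ≤ x^n := pow_le_pow_left₀ hy hxy n
    have hx : 0 ≤ x := hy.trans hxy
    have hS : 0 ≤ x^n + y^n := by positivity
    have h1 : 0 ≤ (x - y) * (x^n - y^n) :=
      mul_nonneg (sub_nonneg.2 hxy) (sub_nonneg.2 hA)
    have hP1 := mul_le_mul_of_nonneg_left ih (add_nonneg hx hy)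
    have hP2 : 0 ≤ ((n:ℝ)+1) * ((x - y) * ((x - y) * (x^n - y^n))) :=
      mul_nonneg (by positivity) (mul_nonneg (sub_nonneg.2 hxy) h1)
    push_cast
    simp only [pow_succ]
    nlinarith [hP1, hP2]

lemma pair_aux (x y b : ℝ) (hy : 0 ≤ y) (hxy : y ≤ x) (hsum : x + y = 1)
    (hdiff : x - y = 2*b) (j k : ℕ) :
    x^j*y^k - x^k*y^j ≤ 2*((j:ℝ)+k)*b*(x^j*y^k + x^k*y^j) := by
  have hx : 0 ≤ x := hy.trans hxy
  have hb0 : 0 ≤ b := by linarith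
  rcases le_or_gt k j with h | h
  · obtain ⟨m, rfl⟩ := Nat.exists_eq_add_of_le h
    have key := tanh_aux x y hy hxy m
    rw [hsum, one_mul] at key
    have hkk : (0:ℝ) ≤ x^k*y^k := by positivity
    have hS' : (0:ℝ) ≤ x^(k+m)*y^k + x^k*y^(k+m) := by positivity
    calc x^(k+m)*y^k - x^k*y^(k+m) = x^k*y^k*(x^m - y^m) := by
            rw [pow_add, pow_add]; ring
      _ ≤ x^k*y^k*((m:ℝ)*(x-y)*(x^m+y^m)) := mul_le_mul_of_nonneg_left key hkk
      _ = (m:ℝ)*(2*b)*(x^(k+m)*y^k + x^k*y^(k+m)) := by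
            rw [hdiff, pow_add, pow_add]; ring
      _ ≤ 2*(((k+m:ℕ):ℝ)+k)*b*(x^(k+m)*y^k + x^k*y^(k+m)) := by
            apply mul_le_mul_of_nonneg_right _ hS'
            have hk : (0:ℝ) ≤ (k:ℝ) := Nat.cast_nonneg k
            push_cast
            nlinarith [hk, hb0, mul_nonneg hk hb0]
  · obtain ⟨m, rfl⟩ := Nat.exists_eq_add_of_le h.le
    have hA : y^m ≤ x^m := pow_le_pow_left₀ hy hxy m
    have hlhs : x^j*y^(j+m) ≤ x^(j+m)*y^j := by
      rw [pow_add, pow_add]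
      have := mul_le_mul_of_nonneg_left hA (by positivity : (0:ℝ) ≤ x^j*y^j)
      nlinarith [this]
    have hrhs : (0:ℝ) ≤ 2*((j:ℝ)+(j+m:ℕ))*b*(x^j*y^(j+m) + x^(j+m)*y^j) := by
      have : (0:ℝ) ≤ (j:ℝ)+(j+m:ℕ) := by positivity
      have h2 : (0:ℝ) ≤ x^j*y^(j+m) + x^(j+m)*y^j := by positivity
      positivity
    linarith

theorem stmt_15 (d : ℕ) (hd : 1 ≤ d) (b : ℝ) (hb0 : 0 ≤ b) (hb : b < 1/2)
    (g : (Fin d → Bool) → ℤ)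
    (hval : ∀ σ, g σ = -1 ∨ g σ = 0 ∨ g σ = 1)
    (hodd : ∀ σ, g (fun i => !σ i) = -g σ)
    (hmono : ∀ σ τ : Fin d → Bool, (∀ i, σ i ≤ τ i) → g σ ≤ g τ)
    (hne : ∃ σ, g σ ≠ 0)
    (W : (Fin d → Bool) → ℝ)
    (hW : ∀ σ, W σ = ∏ i, (if σ i then 1/2 + b else 1/2 - b)) :
    (∑ σ, W σ * (g σ : ℝ)) /
      (∑ σ ∈ Finset.univ.filter (fun σ => g σ ≠ 0), W σ) ≤ 2 * d * b := by
  classical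
  set x : ℝ := 1/2 + b with hxdef
  set y : ℝ := 1/2 - b with hydef
  have hy : 0 ≤ y := by rw [hydef]; linarith
  have hxy : y ≤ x := by rw [hxdef, hydef]; linarith
  have hsum : x + y = 1 := by rw [hxdef, hydef]; ring
  have hdiff : x - y = 2*b := by rw [hxdef, hydef]; ring
  -- positivity of W
  have hWpos : ∀ σ, 0 < W σ := by
    intro σ
    rw [hW σ]
    apply Finset.prod_pos
    intro i _
    split <;> linarith
  -- negation map
  set neg : (Fin d → Bool) → (Fin d → Bool) := fun σ i => !σ i with hnegdef
  have hinv : Function.Involutive neg := by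
    intro σ; funext i; simp [hnegdef]
  have hodd' : ∀ σ, g (neg σ) = -g σ := hodd
  -- counting
  set nn : (Fin d → Bool) → ℕ := fun σ => (Finset.univ.filter (fun i => σ i = true)).card
    with hnndef
  have hnle : ∀ σ, nn σ ≤ d := by
    intro σ
    calc nn σ ≤ Finset.univ.card := Finset.card_filter_le _ _
      _ = d := by simp
  have hcard2 : ∀ σ : Fin d → Bool,
      (Finset.univ.filter (fun i => σ i = false)).card = d - nn σ := by
    intro σ
    have := Finset.card_filter_add_card_filter_not
      (s := (Finset.univ : Finset (Fin d))) (p := fun i => σ i = true)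
    simp only [Finset.card_univ, Fintype.card_fin, Bool.not_eq_true] at this
    simp only [hnndef]
    omega
  have hWform : ∀ σ, W σ = x ^ (nn σ) * y ^ (d - nn σ) := by
    intro σ
    rw [hW σ, Finset.prod_ite, Finset.prod_const, Finset.prod_const]
    simp only [Bool.not_eq_true]
    rw [hcard2 σ]
  have hWnegform : ∀ σ, W (neg σ) = x ^ (d - nn σ) * y ^ (nn σ) := by
    intro σ
    rw [hW (neg σ), Finset.prod_ite]
    have h1 : (Finset.univ.filter (fun i => neg σ i = true)) =
        (Finset.univ.filter (fun i => σ i = false)) := by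
      apply Finset.filter_congr; intro i _; simp [hnegdef]
    have h2 : (Finset.univ.filter (fun i => ¬(neg σ i = true))) =
        (Finset.univ.filter (fun i => σ i = true)) := by
      apply Finset.filter_congr; intro i _; simp [hnegdef]
    rw [h1, h2, Finset.prod_const, Finset.prod_const, hcard2 σ]
  -- pointwise bound
  have hpt : ∀ σ, (W σ - W (neg σ)) * (g σ : ℝ) ≤ 2*d*b*(W σ + W (neg σ)) := by
    intro σ
    have hcast : ((nn σ : ℝ)) + ((d - nn σ : ℕ) : ℝ) = (d : ℝ) := by
      rw [Nat.cast_sub (hnle σ)]; ring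
    have h1 : W σ - W (neg σ) ≤ 2*d*b*(W σ + W (neg σ)) := by
      have := pair_aux x y b hy hxy hsum hdiff (nn σ) (d - nn σ)
      rw [hcast] at this
      rw [hWform σ, hWnegform σ]
      linarith [this]
    have h2 : W (neg σ) - W σ ≤ 2*d*b*(W σ + W (neg σ)) := by
      have := pair_aux x y b hy hxy hsum hdiff (d - nn σ) (nn σ)
      rw [show ((d - nn σ : ℕ) : ℝ) + (nn σ : ℝ) = (d:ℝ) by rw [Nat.cast_sub (hnle σ)]; ring] at this
      rw [hWform σ, hWnegform σ]
      linarith [this]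
    rcases hval σ with h | h | h <;> rw [h] <;> push_cast <;> linarith
  -- denominator positive
  obtain ⟨σ0, hσ0⟩ := hne
  set D : ℝ := ∑ σ ∈ Finset.univ.filter (fun σ => g σ ≠ 0), W σ with hDdef
  have hDpos : 0 < D := by
    apply Finset.sum_pos (fun σ _ => hWpos σ)
    exact ⟨σ0, by simp [hσ0]⟩
  rw [div_le_iff₀ hDpos]
  set N : ℝ := ∑ σ, W σ * (g σ : ℝ) with hNdef
  -- e : perm
  set e := hinv.toPerm with hedef
  have hecoe : ∀ σ, e σ = neg σ := fun _ => rfl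
  have hN' : ∑ σ, W (neg σ) * ((g (neg σ) : ℤ) : ℝ) = N := by
    rw [hNdef]
    exact Equiv.sum_comp e (fun σ => W σ * (g σ : ℝ))
  have hN2 : 2 * N = ∑ σ, (W σ - W (neg σ)) * (g σ : ℝ) := by
    have : ∑ σ, W (neg σ) * ((g (neg σ) : ℤ) : ℝ) = ∑ σ, -(W (neg σ) * (g σ : ℝ)) := by
      apply Finset.sum_congr rfl
      intro σ _
      rw [hodd' σ]
      push_cast
      ring
    rw [two_mul]
    nth_rewrite 2 [← hN']
    rw [this, hNdef, ← Finset.sum_add_distrib]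
    apply Finset.sum_congr rfl
    intro σ _
    ring
  have hfilter : ∑ σ, (W σ - W (neg σ)) * (g σ : ℝ) =
      ∑ σ ∈ Finset.univ.filter (fun σ => g σ ≠ 0), (W σ - W (neg σ)) * (g σ : ℝ) := by
    symm
    apply Finset.sum_filter_of_ne
    intro σ _ hne0
    intro hg0
    apply hne0
    rw [hg0]
    simp
  have hD2 : ∑ σ ∈ Finset.univ.filter (fun σ => g σ ≠ 0), W (neg σ) = D := by
    rw [hDdef]
    apply Finset.sum_nbij' (i := neg) (j := neg)
    · intro σ hσ
      simp only [Finset.mem_filter, Finset.mem_univ, true_and] at hσ ⊢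
      rw [hodd' σ]; simpa using hσ
    · intro σ hσ
      simp only [Finset.mem_filter, Finset.mem_univ, true_and] at hσ ⊢
      rw [hodd' σ]; simpa using hσ
    · intro σ _; exact hinv σ
    · intro σ _; exact hinv σ
    · intro σ _; rfl
  have hbound : 2 * N ≤ 2*d*b*(2*D) := by
    rw [hN2, hfilter]
    calc ∑ σ ∈ Finset.univ.filter (fun σ => g σ ≠ 0), (W σ - W (neg σ)) * (g σ : ℝ)
        ≤ ∑ σ ∈ Finset.univ.filter (fun σ => g σ ≠ 0), 2*d*b*(W σ + W (neg σ)) :=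
          Finset.sum_le_sum (fun σ _ => hpt σ)
      _ = ∑ σ ∈ Finset.univ.filter (fun σ => g σ ≠ 0), (2*d*b*W σ + 2*d*b*W (neg σ)) := by
          apply Finset.sum_congr rfl
          intro σ _
          ring
      _ = 2*d*b*(2*D) := by
          rw [Finset.sum_add_distrib, ← Finset.mul_sum, ← Finset.mul_sum, hD2, hDdef]
          ring
  linarith
end
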